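/- (Proposition 1, condition 2) If KL(p_data ‖ p_{θ,φ}) ≤ KL(p_data ‖ p_θ), then E_{x∼p_data}[log ŵ(x)] ≥ E_{x∼p_θ}[log ŵ(x)]. -/

import Mathlib

open MeasureTheory

/-!
Tilting `pθ` by `ŵ` shifts the KL divergence by an explicit amount: where `p_data > 0`,
`log (p_data / p_{θ,φ}) = log (p_data / pθ) - log ŵ + log Z`, so
`KL(p_data ‖ p_{θ,φ}) = KL(p_data ‖ pθ) - E_{p_data}[log ŵ] + log Z`.
The hypothesis therefore says `log Z ≤ E_{p_data}[log ŵ]`, and Jensen's inequality gives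
`E_{pθ}[log ŵ] ≤ log E_{pθ}[ŵ] = log Z`.
-/

namespace Real

lemma mul_log_div_mul_div {p q w Z : ℝ} (hpq : q = 0 → p = 0) (hw : w ≠ 0) (hZ : Z ≠ 0) :
    p * log (p / (q * w / Z)) = p * log (p / q) - p * log w + p * log Z := by
  rcases eq_or_ne p 0 with rfl | hp
  · simp
  have hq : q ≠ 0 := fun h => hp (hpq h)
  rw [log_div hp (by positivity), log_div hp hq, log_div (mul_ne_zero hq hw) hZ,
    log_mul hq hw]
  ring

lemma log_le_div_sub_one_add_log {t Z : ℝ} (ht : 0 < t) (hZ : 0 < Z) :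
    log t ≤ t / Z - 1 + log Z := by
  have := log_le_sub_one_of_pos (div_pos ht hZ)
  rw [log_div ht.ne' hZ.ne'] at this
  linarith

end Real

namespace MeasureTheory

variable {X : Type*} [MeasurableSpace X] {μ : Measure X}

lemma integral_mul_log_div_mul_div {p q w : X → ℝ} {Z : ℝ} (hp1 : ∫ x, p x ∂μ = 1)
    (hpq : ∀ x, q x = 0 → p x = 0) (hw : ∀ x, w x ≠ 0) (hZ : Z ≠ 0)
    (hpq_int : Integrable (fun x => p x * Real.log (p x / q x)) μ)
    (hpw_int : Integrable (fun x => p x * Real.log (w x)) μ) :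
    ∫ x, p x * Real.log (p x / (q x * w x / Z)) ∂μ
      = ∫ x, p x * Real.log (p x / q x) ∂μ - ∫ x, p x * Real.log (w x) ∂μ + Real.log Z := by
  have hp : Integrable p μ := Integrable.of_integral_ne_zero (by simp [hp1])
  simp_rw [Real.mul_log_div_mul_div (hpq _) (hw _) hZ]
  rw [integral_add (f := fun x => p x * Real.log (p x / q x) - p x * Real.log (w x))
      (hpq_int.sub hpw_int) (hp.mul_const _), integral_sub hpq_int hpw_int,
    integral_mul_const, hp1, one_mul]

lemma integral_mul_log_le_log_integral_mul {p w : X → ℝ} (hp : ∀ x, 0 ≤ p x)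
    (hp1 : ∫ x, p x ∂μ = 1) (hw : ∀ x, 0 < w x) (hpw_pos : 0 < ∫ x, p x * w x ∂μ)
    (hpw_int : Integrable (fun x => p x * w x) μ)
    (hplogw_int : Integrable (fun x => p x * Real.log (w x)) μ) :
    ∫ x, p x * Real.log (w x) ∂μ ≤ Real.log (∫ x, p x * w x ∂μ) := by
  set Z := ∫ x, p x * w x ∂μ
  have hp_int : Integrable p μ := Integrable.of_integral_ne_zero (by simp [hp1])
  have htangent_int : Integrable (fun x => p x * w x / Z - p x + p x * Real.log Z) μ :=
    ((hpw_int.div_const Z).sub hp_int).add (hp_int.mul_const _)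
  calc ∫ x, p x * Real.log (w x) ∂μ
      ≤ ∫ x, (p x * w x / Z - p x + p x * Real.log Z) ∂μ := by
        refine integral_mono hplogw_int htangent_int fun x => ?_
        have := mul_le_mul_of_nonneg_left (Real.log_le_div_sub_one_add_log (hw x) hpw_pos) (hp x)
        linarith [mul_div_assoc (p x) (w x) Z]
    _ = Real.log Z := by
        rw [integral_add (f := fun x => p x * w x / Z - p x) ((hpw_int.div_const Z).sub hp_int)
            (hp_int.mul_const _),
          integral_sub (hpw_int.div_const Z) hp_int, integral_div, integral_mul_const, hp1,
          div_self hpw_pos.ne']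
        ring

end MeasureTheory

theorem resampling_necessary_condition_log_weights_general
    {X : Type*} [MeasurableSpace X] (μ : Measure X)
    (pdata pθ w : X → ℝ) (Z : ℝ)
    (hpθ : ∀ x, 0 ≤ pθ x)
    (hpdata1 : ∫ x, pdata x ∂μ = 1) (hpθ1 : ∫ x, pθ x ∂μ = 1)
    (habs : ∀ x, pθ x = 0 → pdata x = 0)
    (hw : ∀ x, 0 < w x)
    (hZ : Z = ∫ x, pθ x * w x ∂μ) (hZpos : 0 < Z)
    (hZfin : Integrable (fun x => pθ x * w x) μ)
    (hlogθ : Integrable (fun x => pθ x * Real.log (w x)) μ)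
    (pφ : X → ℝ) (hpφ : ∀ x, pφ x = pθ x * w x / Z)
    (hint2 : Integrable (fun x => pdata x * Real.log (pdata x / pθ x)) μ)
    (hint3 : Integrable (fun x => pdata x * Real.log (w x)) μ)
    (hkl : (∫ x, pdata x * Real.log (pdata x / pφ x) ∂μ)
      ≤ (∫ x, pdata x * Real.log (pdata x / pθ x) ∂μ)) :
    (∫ x, pdata x * Real.log (w x) ∂μ) ≥ ∫ x, pθ x * Real.log (w x) ∂μ := by
  have hkl_shift : ∫ x, pdata x * Real.log (pdata x / pφ x) ∂μ
      = ∫ x, pdata x * Real.log (pdata x / pθ x) ∂μ - ∫ x, pdata x * Real.log (w x) ∂μ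
        + Real.log Z := by
    simp_rw [hpφ]
    exact integral_mul_log_div_mul_div hpdata1 habs (fun x => (hw x).ne') hZpos.ne' hint2 hint3
  have hjensen : ∫ x, pθ x * Real.log (w x) ∂μ ≤ Real.log Z :=
    hZ ▸ integral_mul_log_le_log_integral_mul hpθ hpθ1 hw (hZ ▸ hZpos) hZfin hlogθ
  linarith

/-- Proposition 1, condition 2: if the importance resampled model `p_{θ,φ} ∝ pθ · ŵ`
does not worsen the KL fit to `p_data`, then `E_{p_data}[log ŵ] ≥ E_{pθ}[log ŵ]`. -/
theorem resampling_necessary_condition_log_weights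
    {X : Type*} [MeasurableSpace X] (μ : Measure X)
    (pdata pθ w : X → ℝ) (Z : ℝ)
    (hpdata : ∀ x, 0 ≤ pdata x) (hpθ : ∀ x, 0 ≤ pθ x)
    (hpdata1 : ∫ x, pdata x ∂μ = 1) (hpθ1 : ∫ x, pθ x ∂μ = 1)
    (habs : ∀ x, pθ x = 0 → pdata x = 0)
    (hw : ∀ x, 0 < w x)
    (hZ : Z = ∫ x, pθ x * w x ∂μ) (hZpos : 0 < Z)
    (hZfin : Integrable (fun x => pθ x * w x) μ)
    (hlogθ : Integrable (fun x => pθ x * Real.log (w x)) μ)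
    (pφ : X → ℝ) (hpφ : ∀ x, pφ x = pθ x * w x / Z)
    (hint1 : Integrable (fun x => pdata x * Real.log (pdata x / pφ x)) μ)
    (hint2 : Integrable (fun x => pdata x * Real.log (pdata x / pθ x)) μ)
    (hint3 : Integrable (fun x => pdata x * Real.log (w x)) μ)
    (hkl : (∫ x, pdata x * Real.log (pdata x / pφ x) ∂μ)
      ≤ (∫ x, pdata x * Real.log (pdata x / pθ x) ∂μ)) :
    (∫ x, pdata x * Real.log (w x) ∂μ) ≥ ∫ x, pθ x * Real.log (w x) ∂μ :=
  resampling_necessary_condition_log_weights_general μ pdata pθ w Z hpθ hpdata1 hpθ1 habs hw hZ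
    hZpos hZfin hlogθ pφ hpφ hint2 hint3 hkl
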